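/- arXiv:2411.09034 — 3 statements merged into one kernel-verified Lean document; each statement's English description precedes it below -/
import Mathlib

section
/- (Uniform Gronwall inequality) Let g, h, y be non-negative locally integrable functions on (t₀, ∞), with y absolutely continuous and y'(t) ≤ g(t) y(t) + h(t) for a.e. t ≥ t₀. Let r > 0 and suppose there exist constants a₁, a₂, a₃ ≥ 0 such that for all t ≥ t₀: ∫_t^{t+r} g ≤ a₁, ∫_t^{t+r} h ≤ a₂, and ∫_t^{t+r} y ≤ a₃. Then y(t + r) ≤ (a₃/r + a₂) · exp(a₁) for all t ≥ t₀. -/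
open MeasureTheory Set

open intervalIntegral

set_option maxHeartbeats 1000000

/-- Core Grönwall inequality on a compact interval, with integrable coefficients. -/
lemma gronwall_core_aux (a b : ℝ) (hab : a ≤ b) (g h y y' : ℝ → ℝ)
    (hg0 : ∀ t ∈ Icc a b, 0 ≤ g t) (hh0 : ∀ t ∈ Icc a b, 0 ≤ h t)
    (hya0 : 0 ≤ y a)
    (hgi : IntegrableOn g (Icc a b) volume) (hhi : IntegrableOn h (Icc a b) volume)
    (hy'i : IntegrableOn y' (Icc a b) volume)
    (hderiv : ∀ t ∈ Icc a b, HasDerivAt y (y' t) t)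
    (hineq : ∀ t ∈ Icc a b, y' t ≤ g t * y t + h t) :
    y b ≤ (y a + ∫ x in a..b, h x) * Real.exp (∫ x in a..b, g x) := by
  have hycont : ContinuousOn y (Icc a b) :=
    fun u hu => (hderiv u hu).continuousAt.continuousWithinAt
  set G : ℝ → ℝ := fun u => ∫ x in a..u, g x with hGdef
  set F : ℝ → ℝ := fun u => Real.exp (G u) with hFdef
  -- helper: interval integrability
  have hsub : ∀ {c d : ℝ}, c ∈ Icc a b → d ∈ Icc a b → uIcc c d ⊆ Icc a b :=
    fun hc hd => (ordConnected_Icc).uIcc_subset hc hd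
  have hII : ∀ {c d : ℝ}, c ∈ Icc a b → d ∈ Icc a b → IntervalIntegrable g volume c d :=
    fun hc hd => (hgi.mono_set (hsub hc hd)).intervalIntegrable
  have hIIh : ∀ {c d : ℝ}, c ∈ Icc a b → d ∈ Icc a b → IntervalIntegrable h volume c d :=
    fun hc hd => (hhi.mono_set (hsub hc hd)).intervalIntegrable
  have hGadd : ∀ {c d : ℝ}, c ∈ Icc a b → d ∈ Icc a b →
      G d = G c + ∫ x in c..d, g x := by
    intro c d hc hd
    have := integral_add_adjacent_intervals (hII (left_mem_Icc.2 hab) hc) (hII hc hd)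
    simp only [hGdef]
    linarith [this]
  have hGa : G a = 0 := integral_same
  have hFa : F a = 1 := by simp [hFdef, hGa]
  have hGnn : ∀ {c d : ℝ}, c ∈ Icc a b → d ∈ Icc a b → c ≤ d → 0 ≤ ∫ x in c..d, g x := by
    intro c d hc hd hcd
    refine intervalIntegral.integral_nonneg hcd fun u hu => hg0 u ?_
    exact ⟨le_trans hc.1 hu.1, le_trans hu.2 hd.2⟩
  have hFmono : ∀ {c d : ℝ}, c ∈ Icc a b → d ∈ Icc a b → c ≤ d → F c ≤ F d := by
    intro c d hc hd hcd
    have := hGadd hc hd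
    have h2 := hGnn hc hd hcd
    simp only [hFdef]
    exact Real.exp_le_exp.2 (by linarith)
  have hGcont : ContinuousOn G (Icc a b) := by
    have := intervalIntegral.continuousOn_primitive_interval
      (f := g) (μ := volume) (a := a) (b := b) (by rwa [uIcc_of_le hab])
    rwa [uIcc_of_le hab] at this
  have hFcont : ContinuousOn F (Icc a b) := Real.continuous_exp.comp_continuousOn hGcont
  have hFpos : ∀ u, 0 < F u := fun u => Real.exp_pos _
  have hgFi : IntegrableOn (fun x => g x * F x) (Icc a b) volume :=
    hgi.mul_continuousOn hFcont isCompact_Icc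
  have hIIgF : ∀ {c d : ℝ}, c ∈ Icc a b → d ∈ Icc a b →
      IntervalIntegrable (fun x => g x * F x) volume c d :=
    fun hc hd => (hgFi.mono_set (hsub hc hd)).intervalIntegrable
  -- single-piece bound
  have piece : ∀ {c d : ℝ}, c ∈ Icc a b → d ∈ Icc a b → c ≤ d → ∀ δ : ℝ,
      (∫ x in c..d, g x) ≤ δ →
      (∫ x in c..d, g x * F x) ≤ Real.exp δ * (F d - F c) := by
    intro c d hc hd hcd δ hδ
    set Δ : ℝ := ∫ x in c..d, g x with hΔdef
    have hΔ0 : 0 ≤ Δ := hGnn hc hd hcd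
    have step1 : (∫ x in c..d, g x * F x) ≤ ∫ x in c..d, g x * F d := by
      refine intervalIntegral.integral_mono_on hcd (hIIgF hc hd)
        ((hII hc hd).mul_const _) fun u hu => ?_
      have hu' : u ∈ Icc a b := ⟨le_trans hc.1 hu.1, le_trans hu.2 hd.2⟩
      exact mul_le_mul_of_nonneg_left (hFmono hu' hd hu.2) (hg0 u hu')
    have step2 : (∫ x in c..d, g x * F d) = Δ * F d := integral_mul_const _ _
    have hFd : F d = F c * Real.exp Δ := by
      simp only [hFdef, hGadd hc hd, Real.exp_add, hΔdef]
    have hexp : Δ + 1 ≤ Real.exp Δ := Real.add_one_le_exp Δ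
    have hFc : 0 < F c := hFpos c
    have hexpδ : Real.exp Δ ≤ Real.exp δ := Real.exp_le_exp.2 hδ
    have hkey : Δ * F d ≤ Real.exp δ * (F d - F c) := by
      rw [hFd]
      have h1 : Δ * (F c * Real.exp Δ) ≤ (Real.exp Δ - 1) * (F c * Real.exp Δ) :=
        mul_le_mul_of_nonneg_right (by linarith) (by positivity)
      have h2 : (Real.exp Δ - 1) * (F c * Real.exp Δ)
          = Real.exp Δ * (F c * Real.exp Δ - F c) := by ring
      have h3 : 0 ≤ F c * Real.exp Δ - F c := by nlinarith [Real.exp_pos Δ]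
      have h4 : Real.exp Δ * (F c * Real.exp Δ - F c)
          ≤ Real.exp δ * (F c * Real.exp Δ - F c) :=
        mul_le_mul_of_nonneg_right hexpδ h3
      linarith
    linarith [step1, step2.symm.le]
  -- inductive refinement
  have key : ∀ δ : ℝ, 0 < δ → ∀ n : ℕ, ∀ c ∈ Icc a b, ∀ d ∈ Icc a b, c ≤ d →
      (∫ x in c..d, g x) ≤ n * δ →
      (∫ x in c..d, g x * F x) ≤ Real.exp δ * (F d - F c) := by
    intro δ hδ n
    induction n with
    | zero =>
      intro c hc d hd hcd hΔ
      have h0 : (∫ x in c..d, g x) ≤ 0 := by simpa using hΔ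
      exact piece hc hd hcd δ (h0.trans hδ.le)
    | succ n ih =>
      intro c hc d hd hcd hΔ
      by_cases hcase : (∫ x in c..d, g x) ≤ n * δ
      · exact ih c hc d hd hcd hcase
      · push_neg at hcase
        have hφcont : ContinuousOn (fun u => ∫ x in c..u, g x) (Icc c d) := by
          have : ∀ u ∈ Icc c d, G u - G c = ∫ x in c..u, g x := by
            intro u hu
            have hu' : u ∈ Icc a b := ⟨le_trans hc.1 hu.1, le_trans hu.2 hd.2⟩
            have := hGadd hc hu'
            linarith
          refine ContinuousOn.congr ?_ fun u hu => (this u hu).symm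
          exact ((hGcont.mono fun u hu => (⟨le_trans hc.1 hu.1, le_trans hu.2 hd.2⟩ : u ∈ Icc a b)).sub
            continuousOn_const)
        have hmem : (n : ℝ) * δ ∈ Icc (∫ x in c..c, g x) (∫ x in c..d, g x) := by
          constructor
          · rw [intervalIntegral.integral_same]; positivity
          · exact hcase.le
        obtain ⟨m, hm, hφm⟩ := intermediate_value_Icc hcd hφcont hmem
        have hφm' : (∫ x in c..m, g x) = (n : ℝ) * δ := hφm
        have hm' : m ∈ Icc a b := ⟨le_trans hc.1 hm.1, le_trans hm.2 hd.2⟩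
        have hsplit : (∫ x in c..d, g x * F x)
            = (∫ x in c..m, g x * F x) + ∫ x in m..d, g x * F x :=
          (integral_add_adjacent_intervals (hIIgF hc hm') (hIIgF hm' hd)).symm
        have hsplitg : (∫ x in c..d, g x) = (∫ x in c..m, g x) + ∫ x in m..d, g x :=
          (integral_add_adjacent_intervals (hII hc hm') (hII hm' hd)).symm
        have h1 : (∫ x in c..m, g x * F x) ≤ Real.exp δ * (F m - F c) :=
          ih c hc m hm' hm.1 (le_of_eq hφm)
        have h2 : (∫ x in m..d, g x * F x) ≤ Real.exp δ * (F d - F m) := by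
          refine piece hm' hd hm.2 δ ?_
          have : (∫ x in m..d, g x) = (∫ x in c..d, g x) - n * δ := by
            rw [hsplitg, hφm']; ring
          rw [this]
          push_cast at hΔ
          linarith
        linarith [hsplit]
  -- limit δ → 0
  have key2 : ∀ T ∈ Icc a b, (∫ x in a..T, g x * F x) ≤ F T - F a := by
    intro T hT
    have haI : a ∈ Icc a b := left_mem_Icc.2 hab
    have tend : Filter.Tendsto (fun δ => Real.exp δ * (F T - F a)) (nhdsWithin 0 (Ioi 0))
        (nhds (F T - F a)) := by
      have hcont : Continuous (fun δ => Real.exp δ * (F T - F a)) :=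
        Real.continuous_exp.mul continuous_const
      have := hcont.tendsto 0
      simp only [Real.exp_zero, one_mul] at this
      exact this.mono_left nhdsWithin_le_nhds
    refine ge_of_tendsto tend ?_
    filter_upwards [self_mem_nhdsWithin] with δ hδ
    obtain ⟨n, hn⟩ := exists_nat_ge ((∫ x in a..T, g x) / δ)
    exact key δ hδ n a haI T hT hT.1 ((div_le_iff₀ hδ).1 hn)
  -- FTC inequality
  have hgyhi : IntegrableOn (fun x => g x * y x + h x) (Icc a b) volume :=
    (hgi.mul_continuousOn hycont isCompact_Icc).add hhi
  have hIIgyh : ∀ {c d : ℝ}, c ∈ Icc a b → d ∈ Icc a b →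
      IntervalIntegrable (fun x => g x * y x + h x) volume c d :=
    fun hc hd => (hgyhi.mono_set (hsub hc hd)).intervalIntegrable
  have hIIy' : ∀ {c d : ℝ}, c ∈ Icc a b → d ∈ Icc a b →
      IntervalIntegrable y' volume c d :=
    fun hc hd => (hy'i.mono_set (hsub hc hd)).intervalIntegrable
  have haI : a ∈ Icc a b := left_mem_Icc.2 hab
  have hbI : b ∈ Icc a b := right_mem_Icc.2 hab
  have hFTC : ∀ T ∈ Icc a b, y T ≤ y a + ∫ x in a..T, (g x * y x + h x) := by
    intro T hT
    have heq : (∫ x in a..T, y' x) = y T - y a := by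
      refine intervalIntegral.integral_eq_sub_of_hasDerivAt (fun x hx => hderiv x ?_)
        (hIIy' haI hT)
      rw [uIcc_of_le hT.1] at hx
      exact ⟨hx.1, le_trans hx.2 hT.2⟩
    have hmono : (∫ x in a..T, y' x) ≤ ∫ x in a..T, (g x * y x + h x) := by
      refine intervalIntegral.integral_mono_on hT.1 (hIIy' haI hT) (hIIgyh haI hT)
        fun u hu => hineq u ⟨hu.1, le_trans hu.2 hT.2⟩
    linarith
  -- bootstrap with ε
  have Hmain : ∀ ε : ℝ, 0 < ε →
      y b ≤ ((y a + ∫ x in a..b, h x) + ε) * Real.exp (∫ x in a..b, g x) := by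
    intro ε hε
    set K : ℝ := (y a + ∫ x in a..b, h x) + ε with hKdef
    have hhnn : 0 ≤ ∫ x in a..b, h x :=
      intervalIntegral.integral_nonneg hab fun u hu => hh0 u hu
    have hK0 : 0 < K := by positivity
    set S : Set ℝ := {u | u ∈ Icc a b ∧ ∀ v ∈ Icc a u, y v ≤ K * F v} with hSdef
    have haS : a ∈ S := by
      refine ⟨haI, fun v hv => ?_⟩
      have : v = a := le_antisymm hv.2 hv.1
      subst this
      rw [hFa]
      linarith
    have hbddS : BddAbove S := ⟨b, fun u hu => hu.1.2⟩
    set T : ℝ := sSup S with hTdef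
    have hTmem : T ∈ Icc a b :=
      ⟨le_csSup hbddS haS, csSup_le ⟨a, haS⟩ fun u hu => hu.1.2⟩
    have hbelow : ∀ v ∈ Icc a b, v < T → y v ≤ K * F v := by
      intro v hv hvT
      obtain ⟨u, huS, hvu⟩ := exists_lt_of_lt_csSup ⟨a, haS⟩ hvT
      exact huS.2 v ⟨hv.1, hvu.le⟩
    have hclosedT : y T ≤ K * F T := by
      rcases eq_or_lt_of_le hTmem.1 with heq | hlt
      · rw [← heq, hFa]; linarith
      · set φ : ℝ → ℝ := fun v => K * F v - y v with hφdef
        have hφcont : ContinuousOn φ (Icc a b) :=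
          (continuousOn_const.mul hFcont).sub hycont
        have hne : (nhdsWithin T (Ico a T)).NeBot := by
          refine mem_closure_iff_nhdsWithin_neBot.1 ?_
          rw [closure_Ico hlt.ne]
          exact ⟨hlt.le, le_rfl⟩
        have htendφ : Filter.Tendsto φ (nhdsWithin T (Ico a T)) (nhds (φ T)) :=
          (hφcont T hTmem).mono fun v hv => ⟨hv.1, le_trans hv.2.le hTmem.2⟩
        have hφT : 0 ≤ φ T := by
          refine ge_of_tendsto htendφ ?_
          filter_upwards [self_mem_nhdsWithin] with v hv
          have := hbelow v ⟨hv.1, le_trans hv.2.le hTmem.2⟩ hv.2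
          simp only [hφdef]
          linarith
        simp only [hφdef] at hφT
        linarith
    have hIccT : ∀ v ∈ Icc a T, y v ≤ K * F v := by
      intro v hv
      rcases eq_or_lt_of_le hv.2 with heq | hlt
      · rw [heq]; exact hclosedT
      · exact hbelow v ⟨hv.1, le_trans hv.2 hTmem.2⟩ hlt
    -- key estimate at T
    have hyT : y T ≤ K * F T - ε := by
      have h1 := hFTC T hTmem
      have hadd : (∫ x in a..T, (g x * y x + h x))
          = (∫ x in a..T, g x * y x) + ∫ x in a..T, h x := by
        refine intervalIntegral.integral_add ?_ (hIIh haI hTmem)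
        exact ((hgi.mul_continuousOn hycont isCompact_Icc).mono_set
          (hsub haI hTmem)).intervalIntegrable
      have h2 : (∫ x in a..T, g x * y x) ≤ ∫ x in a..T, K * (g x * F x) := by
        refine intervalIntegral.integral_mono_on hTmem.1
          (((hgi.mul_continuousOn hycont isCompact_Icc).mono_set
            (hsub haI hTmem)).intervalIntegrable)
          ((hIIgF haI hTmem).const_mul K) fun u hu => ?_
        have hu' : u ∈ Icc a b := ⟨hu.1, le_trans hu.2 hTmem.2⟩
        have := hIccT u hu
        calc g u * y u ≤ g u * (K * F u) :=
              mul_le_mul_of_nonneg_left this (hg0 u hu')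
          _ = K * (g u * F u) := by ring
      have h3 : (∫ x in a..T, K * (g x * F x)) = K * ∫ x in a..T, g x * F x :=
        intervalIntegral.integral_const_mul _ _
      have h4 : (∫ x in a..T, g x * F x) ≤ F T - F a := key2 T hTmem
      have h5 : K * (∫ x in a..T, g x * F x) ≤ K * (F T - F a) :=
        mul_le_mul_of_nonneg_left h4 hK0.le
      have h6 : (∫ x in a..T, h x) ≤ ∫ x in a..b, h x := by
        have := integral_add_adjacent_intervals (hIIh haI hTmem) (hIIh hTmem hbI)
        have h7 : 0 ≤ ∫ x in T..b, h x :=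
          intervalIntegral.integral_nonneg hTmem.2
            fun u hu => hh0 u ⟨le_trans hTmem.1 hu.1, hu.2⟩
        linarith
      rw [hFa] at h5
      rw [hadd] at h1
      linarith
    -- T must be b
    have hTb : T = b := by
      by_contra hne
      have hTltb : T < b := lt_of_le_of_ne hTmem.2 hne
      set φ : ℝ → ℝ := fun v => K * F v - y v with hφdef
      have hφcont : ContinuousOn φ (Icc a b) :=
        (continuousOn_const.mul hFcont).sub hycont
      have hφTpos : 0 < φ T := by
        simp only [hφdef]
        have := hFpos T
        linarith
      have hev : ∀ᶠ v in nhdsWithin T (Icc a b), 0 < φ v :=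
        (hφcont T hTmem).eventually (eventually_gt_nhds hφTpos)
      rw [eventually_nhdsWithin_iff] at hev
      obtain ⟨δ', hδ', hball⟩ := Metric.eventually_nhds_iff.1 hev
      set T' : ℝ := min b (T + δ' / 2) with hT'def
      have hTT' : T < T' := lt_min hTltb (by linarith)
      have hT'mem : T' ∈ Icc a b := ⟨le_trans hTmem.1 hTT'.le, min_le_left _ _⟩
      have hT'S : T' ∈ S := by
        refine ⟨hT'mem, fun v hv => ?_⟩
        rcases le_or_gt v T with hvT | hvT
        · exact hIccT v ⟨hv.1, hvT⟩
        · have hvb : v ∈ Icc a b := ⟨hv.1, le_trans hv.2 hT'mem.2⟩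
          have hdist : dist v T < δ' := by
            rw [Real.dist_eq, abs_of_pos (by linarith)]
            have : v ≤ T + δ' / 2 := le_trans hv.2 (min_le_right _ _)
            linarith
          have := hball hdist hvb
          simp only [hφdef] at this
          linarith
      have := le_csSup hbddS hT'S
      rw [← hTdef] at this
      linarith
    rw [hTb] at hyT
    have hFb : F b = Real.exp (∫ x in a..b, g x) := rfl
    have := hFpos b
    rw [hFb] at hyT
    nlinarith [Real.exp_pos (∫ x in a..b, g x)]
  -- let ε → 0
  refine le_of_forall_pos_le_add fun ε' hε' => ?_
  have hE : (0:ℝ) < Real.exp (∫ x in a..b, g x) := Real.exp_pos _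
  have := Hmain (ε' / Real.exp (∫ x in a..b, g x)) (div_pos hε' hE)
  have heq : ((y a + ∫ x in a..b, h x) + ε' / Real.exp (∫ x in a..b, g x))
      * Real.exp (∫ x in a..b, g x)
      = (y a + ∫ x in a..b, h x) * Real.exp (∫ x in a..b, g x) + ε' := by
    field_simp
  linarith [heq ▸ this]

/-- **Uniform Gronwall inequality.** Let `g, h, y` be non-negative
locally integrable functions on `(t₀, ∞)` with `y' ≤ g y + h` there, and suppose
`∫_t^{t+r} g ≤ a₁`, `∫_t^{t+r} h ≤ a₂`, `∫_t^{t+r} y ≤ a₃` for all `t ≥ t₀`.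
Then `y(t + r) ≤ (a₃/r + a₂) exp(a₁)` for all `t ≥ t₀`. -/
theorem uniform_gronwall (t₀ r a₁ a₂ a₃ : ℝ) (hr : 0 < r)
    (ha₁ : 0 ≤ a₁) (ha₂ : 0 ≤ a₂) (ha₃ : 0 ≤ a₃)
    (g h y y' : ℝ → ℝ)
    (hg0 : ∀ t ∈ Ioi t₀, 0 ≤ g t) (hh0 : ∀ t ∈ Ioi t₀, 0 ≤ h t)
    (hy0 : ∀ t ∈ Ioi t₀, 0 ≤ y t)
    (hgloc : LocallyIntegrableOn g (Ioi t₀) volume)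
    (hhloc : LocallyIntegrableOn h (Ioi t₀) volume)
    (hyloc : LocallyIntegrableOn y (Ioi t₀) volume)
    (hy'loc : LocallyIntegrableOn y' (Ioi t₀) volume)
    (hderiv : ∀ t ∈ Ioi t₀, HasDerivAt y (y' t) t)
    (hineq : ∀ t ∈ Ioi t₀, y' t ≤ g t * y t + h t)
    (hg : ∀ t, t₀ ≤ t → (∫ s in t..(t + r), g s) ≤ a₁)
    (hh : ∀ t, t₀ ≤ t → (∫ s in t..(t + r), h s) ≤ a₂)
    (hy : ∀ t, t₀ ≤ t → (∫ s in t..(t + r), y s) ≤ a₃) :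
    ∀ t, t₀ ≤ t → y (t + r) ≤ (a₃ / r + a₂) * Real.exp a₁ := by
  have stepA : ∀ t, t₀ < t → y (t + r) ≤ (a₃ / r + a₂) * Real.exp a₁ := by
    intro t ht
    have htr : t ≤ t + r := by linarith
    have hsub : Icc t (t + r) ⊆ Ioi t₀ := fun u hu => lt_of_lt_of_le ht hu.1
    have hgi : IntegrableOn g (Icc t (t + r)) volume :=
      hgloc.integrableOn_compact_subset hsub isCompact_Icc
    have hhi : IntegrableOn h (Icc t (t + r)) volume :=
      hhloc.integrableOn_compact_subset hsub isCompact_Icc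
    have hyi : IntegrableOn y (Icc t (t + r)) volume :=
      hyloc.integrableOn_compact_subset hsub isCompact_Icc
    have hy'i : IntegrableOn y' (Icc t (t + r)) volume :=
      hy'loc.integrableOn_compact_subset hsub isCompact_Icc
    have hIIg : IntervalIntegrable g volume t (t + r) := by
      rw [intervalIntegrable_iff_integrableOn_Icc_of_le htr]; exact hgi
    have hIIh : IntervalIntegrable h volume t (t + r) := by
      rw [intervalIntegrable_iff_integrableOn_Icc_of_le htr]; exact hhi
    have hIIy : IntervalIntegrable y volume t (t + r) := by
      rw [intervalIntegrable_iff_integrableOn_Icc_of_le htr]; exact hyi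
    have claim : ∀ s ∈ Icc t (t + r), y (t + r) ≤ (y s + a₂) * Real.exp a₁ := by
      intro s hs
      have hsI : ∀ {u : ℝ}, u ∈ Icc s (t + r) → u ∈ Icc t (t + r) :=
        fun hu => ⟨le_trans hs.1 hu.1, hu.2⟩
      have hsub2 : Icc s (t + r) ⊆ Icc t (t + r) := fun u hu => hsI hu
      have hcore := gronwall_core_aux s (t + r) hs.2 g h y y'
        (fun u hu => hg0 u (hsub (hsI hu))) (fun u hu => hh0 u (hsub (hsI hu)))
        (hy0 s (hsub hs))
        (hgi.mono_set hsub2) (hhi.mono_set hsub2) (hy'i.mono_set hsub2)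
        (fun u hu => hderiv u (hsub (hsI hu))) (fun u hu => hineq u (hsub (hsI hu)))
      -- bound the integrals
      have hIIgs1 : IntervalIntegrable g volume t s :=
        hIIg.mono_set (by rw [uIcc_of_le htr, uIcc_of_le hs.1]; exact Icc_subset_Icc le_rfl hs.2)
      have hIIgs2 : IntervalIntegrable g volume s (t + r) :=
        hIIg.mono_set (by rw [uIcc_of_le htr, uIcc_of_le hs.2]; exact Icc_subset_Icc hs.1 le_rfl)
      have hIIhs1 : IntervalIntegrable h volume t s :=
        hIIh.mono_set (by rw [uIcc_of_le htr, uIcc_of_le hs.1]; exact Icc_subset_Icc le_rfl hs.2)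
      have hIIhs2 : IntervalIntegrable h volume s (t + r) :=
        hIIh.mono_set (by rw [uIcc_of_le htr, uIcc_of_le hs.2]; exact Icc_subset_Icc hs.1 le_rfl)
      have hgbound : (∫ x in s..(t + r), g x) ≤ a₁ := by
        have hsplit := intervalIntegral.integral_add_adjacent_intervals hIIgs1 hIIgs2
        have hnn : 0 ≤ ∫ x in t..s, g x :=
          intervalIntegral.integral_nonneg hs.1 fun u hu => hg0 u (hsub ⟨hu.1, le_trans hu.2 hs.2⟩)
        have := hg t ht.le
        linarith
      have hhbound : (∫ x in s..(t + r), h x) ≤ a₂ := by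
        have hsplit := intervalIntegral.integral_add_adjacent_intervals hIIhs1 hIIhs2
        have hnn : 0 ≤ ∫ x in t..s, h x :=
          intervalIntegral.integral_nonneg hs.1 fun u hu => hh0 u (hsub ⟨hu.1, le_trans hu.2 hs.2⟩)
        have := hh t ht.le
        linarith
      have hhnn : 0 ≤ ∫ x in s..(t + r), h x :=
        intervalIntegral.integral_nonneg hs.2 fun u hu => hh0 u (hsub (hsI hu))
      have hys : 0 ≤ y s := hy0 s (hsub hs)
      calc y (t + r) ≤ (y s + ∫ x in s..(t + r), h x) * Real.exp (∫ x in s..(t + r), g x) :=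
            hcore
        _ ≤ (y s + a₂) * Real.exp a₁ := by
            have h1 : Real.exp (∫ x in s..(t + r), g x) ≤ Real.exp a₁ :=
              Real.exp_le_exp.2 hgbound
            have h2 : 0 < Real.exp (∫ x in s..(t + r), g x) := Real.exp_pos _
            nlinarith
    have hmono : (∫ s in t..(t + r), y (t + r))
        ≤ ∫ s in t..(t + r), (y s + a₂) * Real.exp a₁ := by
      refine intervalIntegral.integral_mono_on htr intervalIntegrable_const
        ((hIIy.add intervalIntegrable_const).mul_const _) claim
    have hLHS : (∫ s in t..(t + r), y (t + r)) = r * y (t + r) := by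
      rw [intervalIntegral.integral_const]
      simp [smul_eq_mul]
    have hRHS : (∫ s in t..(t + r), (y s + a₂) * Real.exp a₁)
        = ((∫ s in t..(t + r), y s) + r * a₂) * Real.exp a₁ := by
      rw [intervalIntegral.integral_mul_const, intervalIntegral.integral_add hIIy
        intervalIntegrable_const, intervalIntegral.integral_const]
      simp [smul_eq_mul]
    rw [hLHS, hRHS] at hmono
    have hyb := hy t ht.le
    have hE : (0:ℝ) < Real.exp a₁ := Real.exp_pos _
    have : r * y (t + r) ≤ (a₃ + r * a₂) * Real.exp a₁ := by nlinarith
    rw [div_add' _ _ _ hr.ne'] 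
    rw [div_mul_eq_mul_div, le_div_iff₀ hr]
    linarith [this]
  intro t ht
  have hcont : ContinuousAt y (t + r) :=
    (hderiv (t + r) (by simp only [mem_Ioi]; linarith)).continuousAt
  have htend : Filter.Tendsto (fun n : ℕ => (t + 1 / ((n : ℝ) + 1)) + r)
      Filter.atTop (nhds (t + r)) := by
    have h1 : Filter.Tendsto (fun n : ℕ => 1 / ((n : ℝ) + 1)) Filter.atTop (nhds 0) :=
      tendsto_one_div_add_atTop_nhds_zero_nat
    have := ((tendsto_const_nhds (x := t)).add h1).add (tendsto_const_nhds (x := r))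
    simpa using this
  refine le_of_tendsto (hcont.tendsto.comp htend) ?_
  refine Filter.Eventually.of_forall fun n => ?_
  refine stepA (t + 1 / ((n : ℝ) + 1)) ?_
  have : (0:ℝ) < 1 / ((n : ℝ) + 1) := by positivity
  linarith
end

section
/- (Finite fractal dimension via smoothing) Let E₁ be a Banach space compactly embedded in a Banach space E, let X ⊆ E₁ be compact, and let L : X → X satisfy L(X) = X and ‖Lx₁ − Lx₂‖_{E₁} ≤ α ‖x₁ − x₂‖_E for all x₁, x₂ ∈ X and some α > 0. Then the fractal (box-counting) dimension of X in E is finite and satisfies dim_F X ≤ H_{1/(4α)}(B_{E₁}), where H_ε(B_{E₁}) = log₂ N_ε(B_{E₁}) is the Kolmogorov ε-entropy of the unit ball B_{E₁} of E₁ viewed as a relatively compact subset of E. -/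
/-!
Take `N_ε(ι X)` points `p ∈ X` such that the `E`-balls of radius `2ε` around `ι p` cover `ι X`.
Every point of `X` is `L y`, and if `‖ι y - ι p‖ < 2ε` the smoothing estimate puts `L y - L p` in
the `E₁`-ball of radius `2αε`, which is covered in `E` by `N_{1/(4α)}(B_{E₁})` balls of radius
`ε/2`. Hence `N_{ε/2}(ι X) ≤ N_{1/(4α)}(B_{E₁}) · N_ε(ι X)`, and iterating this halving estimate
gives `N_{2^{-k}}(ι X) ≤ C · N_{1/(4α)}(B_{E₁})^k`, which is the dimension bound.
-/

open Filter

/-- The minimal number of `ε`-balls (in the metric of `E`) needed to cover `S`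
(the junk value `0` is obtained when no finite cover exists). -/
noncomputable def coveringNumber {E : Type*} [PseudoMetricSpace E] (ε : ℝ) (S : Set E) : ℕ :=
  sInf {n : ℕ | ∃ t : Finset E, t.card = n ∧ S ⊆ ⋃ x ∈ t, Metric.ball x ε}

/-- The Kolmogorov `ε`-entropy `H_ε(S) = log₂ N_ε(S)`. -/
noncomputable def kolmogorovEntropy {E : Type*} [PseudoMetricSpace E] (ε : ℝ) (S : Set E) : ℝ :=
  Real.logb 2 (coveringNumber ε S)

/-- The fractal (box-counting) dimension
`dim_F S = limsup_{ε→0⁺} log₂ N_ε(S) / log₂(1/ε)`. -/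
noncomputable def fractalDim {E : Type*} [PseudoMetricSpace E] (S : Set E) : ℝ :=
  Filter.limsup (fun ε : ℝ => kolmogorovEntropy ε S / Real.logb 2 (1 / ε))
    (nhdsWithin 0 (Set.Ioi 0))

open Real

section Covering

variable {E : Type*} [PseudoMetricSpace E]

lemma coveringNumber_le_card {ε : ℝ} {S : Set E} {t : Finset E}
    (h : S ⊆ ⋃ x ∈ t, Metric.ball x ε) : coveringNumber ε S ≤ t.card :=
  Nat.sInf_le ⟨t, rfl, h⟩

lemma TotallyBounded.exists_finset_card_eq_coveringNumber {ε : ℝ} {S : Set E}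
    (hS : TotallyBounded S) (hε : 0 < ε) :
    ∃ t : Finset E, t.card = coveringNumber ε S ∧ S ⊆ ⋃ x ∈ t, Metric.ball x ε := by
  obtain ⟨t, ht, hSt⟩ := Metric.totallyBounded_iff.1 hS ε hε
  exact Nat.sInf_mem (s := {n | ∃ t : Finset E, t.card = n ∧ S ⊆ ⋃ x ∈ t, Metric.ball x ε})
    ⟨_, ht.toFinset, rfl, by simpa using hSt⟩

lemma TotallyBounded.coveringNumber_anti {ε ε' : ℝ} {S : Set E} (hS : TotallyBounded S)
    (hε : 0 < ε) (h : ε ≤ ε') : coveringNumber ε' S ≤ coveringNumber ε S := by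
  obtain ⟨t, ht, hSt⟩ := hS.exists_finset_card_eq_coveringNumber hε
  exact ht ▸ coveringNumber_le_card
    (hSt.trans <| Set.iUnion₂_mono fun x _ => Metric.ball_subset_ball h)

lemma TotallyBounded.exists_finset_subset_image_subset_iUnion_ball {α : Type*} (f : α → E)
    {S : Set α} {ε : ℝ} (hS : TotallyBounded (f '' S)) (hε : 0 < ε) :
    ∃ s : Finset α, ↑s ⊆ S ∧ s.card ≤ coveringNumber ε (f '' S) ∧
      f '' S ⊆ ⋃ y ∈ s, Metric.ball (f y) (2 * ε) := by
  classical
  rcases S.eq_empty_or_nonempty with rfl | ⟨y₀, hy₀⟩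
  · exact ⟨∅, by simp, by simp, by simp⟩
  obtain ⟨t, ht, hSt⟩ := hS.exists_finset_card_eq_coveringNumber hε
  have : ∀ x : E, ∃ y ∈ S, (∃ y' ∈ S, f y' ∈ Metric.ball x ε) → f y ∈ Metric.ball x ε := fun x =>
    if h : ∃ y' ∈ S, f y' ∈ Metric.ball x ε then h.imp fun _ hy => ⟨hy.1, fun _ => hy.2⟩
    else ⟨y₀, hy₀, fun h' => absurd h' h⟩
  choose p hpS hp using this
  refine ⟨t.image p, by simpa [Set.subset_def] using fun x _ => hpS x,
    ht ▸ Finset.card_image_le, ?_⟩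
  rintro _ ⟨y, hy, rfl⟩
  obtain ⟨x, hx, hyx⟩ : ∃ x ∈ t, f y ∈ Metric.ball x ε := by simpa using hSt ⟨y, hy, rfl⟩
  refine Set.mem_iUnion₂.2 ⟨p x, Finset.mem_image_of_mem p hx, ?_⟩
  calc dist (f y) (f (p x)) ≤ dist (f y) x + dist (f (p x)) x := dist_triangle_right _ _ _
    _ < ε + ε := add_lt_add hyx (hp x ⟨y, hy, hyx⟩)
    _ = 2 * ε := by ring

lemma coveringNumber_div_two_pow_le {S : Set E} {A : ℕ}
    (h : ∀ ε > 0, coveringNumber (ε / 2) S ≤ A * coveringNumber ε S) {ε : ℝ} (hε : 0 < ε) :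
    ∀ k : ℕ, coveringNumber (ε / 2 ^ k) S ≤ A ^ k * coveringNumber ε S
  | 0 => by simp
  | k + 1 => calc
      coveringNumber (ε / 2 ^ (k + 1)) S = coveringNumber (ε / 2 ^ k / 2) S := by
        rw [pow_succ, div_div]
      _ ≤ A * (A ^ k * coveringNumber ε S) :=
        (h (ε / 2 ^ k) (by positivity)).trans
          (Nat.mul_le_mul_left A (coveringNumber_div_two_pow_le h hε k))
      _ = A ^ (k + 1) * coveringNumber ε S := by ring

end Covering

lemma logb_natCast_nonneg {b : ℝ} (hb : 1 < b) (n : ℕ) : 0 ≤ logb b n :=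
  div_nonneg (log_natCast_nonneg n) (log_nonneg hb.le)

lemma logb_natCast_le_of_le_pow_mul {b : ℝ} (hb : 1 < b) {m a n c : ℕ} (h : m ≤ a ^ n * c) :
    logb b m ≤ n * logb b a + logb b c := by
  rcases Nat.eq_zero_or_pos m with rfl | hm
  · simpa using add_nonneg (mul_nonneg n.cast_nonneg (logb_natCast_nonneg hb a))
      (logb_natCast_nonneg hb c)
  obtain ⟨han, hc⟩ := CanonicallyOrderedAdd.mul_pos.1 (hm.trans_le h)
  calc logb b m ≤ logb b ((a : ℝ) ^ n * c) :=
        logb_le_logb_of_le hb (by positivity) (by exact_mod_cast h)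
    _ = n * logb b a + logb b c := by
        rw [logb_mul (by exact_mod_cast han.ne') (by positivity), logb_pow]

section Dimension

variable {E : Type*} [PseudoMetricSpace E]

lemma kolmogorovEntropy_le_of_coveringNumber_half_le {S : Set E} (hS : TotallyBounded S) {A : ℕ}
    (h : ∀ ε > 0, coveringNumber (ε / 2) S ≤ A * coveringNumber ε S) {ε : ℝ} (hε : 0 < ε)
    (hε₁ : ε ≤ 1) :
    kolmogorovEntropy ε S ≤ (logb 2 (1 / ε) + 1) * logb 2 A + kolmogorovEntropy 1 S := by
  set n := ⌈logb 2 (1 / ε)⌉₊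
  have hlog_nonneg : 0 ≤ logb 2 (1 / ε) := logb_nonneg one_lt_two (one_le_one_div hε hε₁)
  have hn : 1 / 2 ^ n ≤ ε := by
    have : 1 / ε ≤ 2 ^ n := by
      rw [← rpow_natCast, ← logb_le_iff_le_rpow one_lt_two (by positivity)]
      exact Nat.le_ceil _
    rwa [div_le_comm₀ (by positivity) hε]
  have hN : coveringNumber ε S ≤ A ^ n * coveringNumber 1 S :=
    (hS.coveringNumber_anti (by positivity) hn).trans (coveringNumber_div_two_pow_le h one_pos n)
  calc kolmogorovEntropy ε S ≤ n * logb 2 A + kolmogorovEntropy 1 S :=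
        logb_natCast_le_of_le_pow_mul one_lt_two hN
    _ ≤ (logb 2 (1 / ε) + 1) * logb 2 A + kolmogorovEntropy 1 S := by
        gcongr
        · exact logb_natCast_nonneg one_lt_two A
        · exact (Nat.ceil_lt_add_one hlog_nonneg).le

lemma fractalDim_le_logb_of_coveringNumber_half_le {S : Set E} (hS : TotallyBounded S) {A : ℕ}
    (h : ∀ ε > 0, coveringNumber (ε / 2) S ≤ A * coveringNumber ε S) :
    fractalDim S ≤ logb 2 A := by
  set a := logb 2 (A : ℝ)
  set c := kolmogorovEntropy 1 S
  have hlog : Tendsto (fun ε : ℝ => logb 2 (1 / ε)) (nhdsWithin 0 (Set.Ioi 0)) atTop := by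
    simpa only [one_div, Function.comp_def] using
      (tendsto_logb_atTop one_lt_two).comp tendsto_inv_nhdsGT_zero
  have hbound : Tendsto (fun ε : ℝ => a + (a + c) / logb 2 (1 / ε))
      (nhdsWithin 0 (Set.Ioi 0)) (nhds a) := by
    simpa using tendsto_const_nhds.add (tendsto_const_nhds.div_atTop hlog)
  have hsmall : ∀ᶠ ε in nhdsWithin (0 : ℝ) (Set.Ioi 0), ε ∈ Set.Ioo 0 1 :=
    Ioo_mem_nhdsGT (one_pos : (0 : ℝ) < 1)
  rw [fractalDim, ← hbound.limsup_eq]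
  refine limsup_le_limsup ?_ (isCoboundedUnder_le_of_eventually_le _ (x := 0) ?_)
    hbound.isBoundedUnder_le
  · filter_upwards [hsmall] with ε ⟨hε, hε₁⟩
    have hpos : 0 < logb 2 (1 / ε) := logb_pos one_lt_two (one_lt_one_div hε hε₁)
    rw [div_le_iff₀ hpos]
    calc kolmogorovEntropy ε S ≤ (logb 2 (1 / ε) + 1) * a + c :=
          kolmogorovEntropy_le_of_coveringNumber_half_le hS h hε hε₁.le
      _ = (a + (a + c) / logb 2 (1 / ε)) * logb 2 (1 / ε) := by field_simp; ring
  · filter_upwards [hsmall] with ε ⟨hε, hε₁⟩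
    exact div_nonneg (logb_natCast_nonneg one_lt_two _)
      (logb_nonneg one_lt_two (one_le_one_div hε hε₁.le))

end Dimension

section Smoothing

variable {E₁ E : Type*} [NormedAddCommGroup E₁] [NormedSpace ℝ E₁]
  [NormedAddCommGroup E] [NormedSpace ℝ E]

lemma coveringNumber_half_image_le_of_smoothing (ι : E₁ →L[ℝ] E)
    (hB : TotallyBounded (ι '' Metric.closedBall (0 : E₁) 1)) {X : Set E₁}
    (hX : TotallyBounded (ι '' X)) {L : E₁ → E₁} (hLX : X ⊆ L '' X) {α : ℝ} (hα : 0 < α)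
    (hsm : ∀ x₁ ∈ X, ∀ x₂ ∈ X, ‖L x₁ - L x₂‖ ≤ α * ‖ι x₁ - ι x₂‖) {ε : ℝ} (hε : 0 < ε) :
    coveringNumber (ε / 2) (ι '' X) ≤
      coveringNumber (1 / (4 * α)) (ι '' Metric.closedBall (0 : E₁) 1) *
        coveringNumber ε (ι '' X) := by
  classical
  obtain ⟨s, hsX, hs, hXs⟩ := hX.exists_finset_subset_image_subset_iUnion_ball ι hε
  obtain ⟨t, ht, hBt⟩ := hB.exists_finset_card_eq_coveringNumber (by positivity : 0 < 1 / (4 * α))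
  set r := 2 * α * ε
  have hr : 0 < r := by positivity
  have hcov : ι '' X ⊆ ⋃ c ∈ (t ×ˢ s).image (fun q => r • q.1 + ι (L q.2)),
      Metric.ball c (ε / 2) := by
    rintro _ ⟨_, hLy, rfl⟩
    obtain ⟨y, hy, rfl⟩ := hLX hLy
    obtain ⟨p, hp, hyp⟩ : ∃ p ∈ s, ι y ∈ Metric.ball (ι p) (2 * ε) := by
      simpa using hXs ⟨y, hy, rfl⟩
    set v := r⁻¹ • (L y - L p)
    have hv : v ∈ Metric.closedBall 0 1 := by
      rw [mem_closedBall_zero_iff, norm_smul, norm_inv, norm_of_nonneg hr.le, inv_mul_le_one₀ hr]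
      calc ‖L y - L p‖ ≤ α * ‖ι y - ι p‖ := hsm y hy p (hsX hp)
        _ ≤ α * (2 * ε) := by
          gcongr
          rw [← dist_eq_norm]
          exact (Metric.mem_ball.1 hyp).le
        _ = r := by ring
    obtain ⟨z, hz, hvz⟩ : ∃ z ∈ t, ι v ∈ Metric.ball z (1 / (4 * α)) := by
      simpa using hBt ⟨v, hv, rfl⟩
    refine Set.mem_iUnion₂.2
      ⟨r • z + ι (L p), Finset.mem_image.2 ⟨(z, p), Finset.mem_product.2 ⟨hz, hp⟩, rfl⟩, ?_⟩
    have hrescale : ι (L y) - (r • z + ι (L p)) = r • (ι v - z) := by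
      rw [map_smul, smul_sub, smul_smul, mul_inv_cancel₀ hr.ne', one_smul, map_sub]
      abel
    calc dist (ι (L y)) (r • z + ι (L p)) = r * dist (ι v) z := by
          rw [dist_eq_norm, hrescale, norm_smul, norm_of_nonneg hr.le, dist_eq_norm]
      _ < r * (1 / (4 * α)) := mul_lt_mul_of_pos_left hvz hr
      _ = ε / 2 := by field_simp; ring
  calc coveringNumber (ε / 2) (ι '' X) ≤ ((t ×ˢ s).image _).card := coveringNumber_le_card hcov
    _ ≤ (t ×ˢ s).card := Finset.card_image_le
    _ ≤ _ := by rw [Finset.card_product, ht]; exact Nat.mul_le_mul_left _ hs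

end Smoothing

theorem fractalDim_le_of_smoothing_general {E₁ E : Type*}
    [NormedAddCommGroup E₁] [NormedSpace ℝ E₁]
    [NormedAddCommGroup E] [NormedSpace ℝ E]
    (ι : E₁ →L[ℝ] E)
    (hcpt : IsCompact (closure (ι '' Metric.closedBall (0 : E₁) 1)))
    (X : Set E₁) (hX : IsCompact X)
    (L : E₁ → E₁) (hLX : L '' X = X)
    (α : ℝ) (hα : 0 < α)
    (hsm : ∀ x₁ ∈ X, ∀ x₂ ∈ X, ‖L x₁ - L x₂‖ ≤ α * ‖ι x₁ - ι x₂‖) :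
    fractalDim (ι '' X)
      ≤ kolmogorovEntropy (1 / (4 * α)) (ι '' Metric.closedBall (0 : E₁) 1) := by
  have hB : TotallyBounded (ι '' Metric.closedBall (0 : E₁) 1) :=
    hcpt.totallyBounded.subset subset_closure
  have hXι : TotallyBounded (ι '' X) := (hX.image ι.continuous).totallyBounded
  exact fractalDim_le_logb_of_coveringNumber_half_le hXι fun ε hε =>
    coveringNumber_half_image_le_of_smoothing ι hB hXι hLX.ge hα hsm hε

/-- **Finite fractal dimension via smoothing.** If `E₁` is compactly
embedded in `E` via `ι`, `X ⊆ E₁` is compact, and `L : X → X` satisfies `L(X) = X`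
and `‖Lx₁ − Lx₂‖_{E₁} ≤ α ‖x₁ − x₂‖_E`, then the fractal dimension of `X` in `E`
is at most the `1/(4α)`-entropy of the unit ball of `E₁` viewed in `E`. -/
theorem fractalDim_le_of_smoothing {E₁ E : Type*}
    [NormedAddCommGroup E₁] [NormedSpace ℝ E₁]
    [NormedAddCommGroup E] [NormedSpace ℝ E]
    (ι : E₁ →L[ℝ] E) (hinj : Function.Injective ι)
    (hcpt : IsCompact (closure (ι '' Metric.closedBall (0 : E₁) 1)))
    (X : Set E₁) (hX : IsCompact X)
    (L : E₁ → E₁) (hLX : L '' X = X)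
    (α : ℝ) (hα : 0 < α)
    (hsm : ∀ x₁ ∈ X, ∀ x₂ ∈ X, ‖L x₁ - L x₂‖ ≤ α * ‖ι x₁ - ι x₂‖) :
    fractalDim (ι '' X)
      ≤ kolmogorovEntropy (1 / (4 * α)) (ι '' Metric.closedBall (0 : E₁) 1) :=
  fractalDim_le_of_smoothing_general ι hcpt X hX L hLX α hα hsm
end

section
/- Let X be a Banach space and S(t) a semigroup on X possessing a compact absorbing set K (i.e., for every bounded B ⊆ X there is t₀(B) with S(t)B ⊆ K for all t ≥ t₀(B)). Then the ω-limit set ω(K) = ⋂_{t≥0} closure(⋃_{s≥t} S(s)K) is nonempty, compact, invariant under S(t), and attracts all bounded sets: for every bounded B ⊆ X, dist(S(t)B, ω(K)) → 0 as t → ∞, where dist(A, B) = sup_{a∈A} inf_{b∈B} ‖a − b‖. -/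
/-!
For `t ≥ t₀` (the absorption time of `K` into itself) the closed tails
`C t = closure (⋃ s ≥ t, S s '' K)` form a decreasing family of nonempty compact subsets of `K`
with intersection `ω(K)`, and `S τ '' C t = C (τ + t)`. Cantor's intersection theorem makes
`ω(K)` nonempty; a continuous map commutes with decreasing intersections of compacta, which
gives invariance; and a decreasing family of compacta eventually lies in any neighbourhood of
its intersection, so `S t '' K`, and hence `S t '' B` for absorbed `B`, eventually lies in the
`ε`-thickening of `ω(K)`.
-/

open Set

/-- The `ω`-limit set `ω(K) = ⋂_{t ≥ 0} closure (⋃_{s ≥ t} S(s)K)` of a set `K`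
under a semigroup `S`. -/
def omegaSet {X : Type*} [TopologicalSpace X] (S : ℝ → X → X) (K : Set X) : Set X :=
  ⋂ t ∈ Set.Ici (0 : ℝ), closure (⋃ s ∈ Set.Ici t, S s '' K)

open Filter Topology

theorem image_iInter_of_directed_isCompact {X Y ι : Type*} [TopologicalSpace X]
    [TopologicalSpace Y] [T2Space X] [T1Space Y] [Nonempty ι] {f : X → Y} (hf : Continuous f)
    {V : ι → Set X} (hV : Directed (· ⊇ ·) V) (hVc : ∀ i, IsCompact (V i)) :
    f '' ⋂ i, V i = ⋂ i, f '' V i := by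
  refine (image_iInter_subset V f).antisymm fun y hy => ?_
  have hfiber : IsClosed (f ⁻¹' {y}) := isClosed_singleton.preimage hf
  obtain ⟨x, hx⟩ := IsCompact.nonempty_iInter_of_directed_nonempty_isCompact_isClosed
    (fun i => V i ∩ f ⁻¹' {y})
    (fun i j => (hV i j).imp fun _ hk => ⟨inter_subset_inter_left _ hk.1,
      inter_subset_inter_left _ hk.2⟩)
    (fun i => by obtain ⟨x, hx, rfl⟩ := mem_iInter.1 hy i; exact ⟨x, hx, rfl⟩)
    (fun i => (hVc i).inter_right hfiber) (fun i => (hVc i).isClosed.inter hfiber)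
  rw [← iInter_inter] at hx
  exact ⟨x, hx⟩

section OrbitTail

variable {X : Type*} (S : ℝ → X → X) (K : Set X)

def orbitTail (t : ℝ) : Set X :=
  ⋃ s ∈ Ici t, S s '' K

variable {S K}

theorem orbitTail_antitone : Antitone (orbitTail S K) :=
  fun _ _ hab => biUnion_subset_biUnion_left fun _ hs => le_trans hab hs

theorem image_subset_orbitTail {s t : ℝ} (hts : t ≤ s) : S s '' K ⊆ orbitTail S K t :=
  subset_biUnion_of_mem (u := fun s => S s '' K) hts

theorem orbitTail_nonempty (hK : K.Nonempty) (t : ℝ) : (orbitTail S K t).Nonempty :=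
  (hK.image (S t)).mono (image_subset_orbitTail le_rfl)

theorem image_orbitTail (hSadd : ∀ s t : ℝ, 0 ≤ s → 0 ≤ t → ∀ x, S (s + t) x = S s (S t x))
    {τ s : ℝ} (hτ : 0 ≤ τ) (hs : 0 ≤ s) : S τ '' orbitTail S K s = orbitTail S K (τ + s) := by
  have hcomp (r : ℝ) (hr : 0 ≤ r) : S τ '' (S r '' K) = S (τ + r) '' K := by
    rw [image_image]
    exact image_congr fun x _ => (hSadd τ r hτ hr x).symm
  rw [orbitTail, image_iUnion₂]
  refine subset_antisymm (iUnion₂_subset fun r hr => ?_) (iUnion₂_subset fun r hr => ?_)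
  · rw [hcomp r (hs.trans hr)]
    exact image_subset_orbitTail (add_le_add_right (mem_Ici.1 hr) τ)
  · have hτr : s ≤ r - τ := by linarith [mem_Ici.1 hr]
    rw [← add_sub_cancel τ r, ← hcomp (r - τ) (hs.trans hτr)]
    exact subset_biUnion_of_mem (u := fun r => S τ '' (S r '' K)) hτr

theorem eventually_image_subset_of_image_subset
    (hSadd : ∀ s t : ℝ, 0 ≤ s → 0 ≤ t → ∀ x, S (s + t) x = S s (S t x)) {B U : Set X} {tB : ℝ}
    (htB : 0 ≤ tB) (hBK : S tB '' B ⊆ K) (hKU : ∀ᶠ t in atTop, S t '' K ⊆ U) :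
    ∀ᶠ t in atTop, S t '' B ⊆ U := by
  filter_upwards [(tendsto_atTop_add_const_right atTop (-tB) tendsto_id).eventually hKU,
    eventually_ge_atTop tB] with t hKU ht
  rintro _ ⟨x, hx, rfl⟩
  rw [← neg_add_cancel_right t tB, hSadd _ _ (by linarith) htB]
  exact hKU (mem_image_of_mem _ (hBK (mem_image_of_mem _ hx)))

end OrbitTail

section OmegaSet

variable {X : Type*} [TopologicalSpace X] {S : ℝ → X → X} {K : Set X} {t₀ : ℝ}

theorem omegaSet_eq_iInter_closure_orbitTail {ι : Type*} (g : ι → ℝ) (hg₀ : ∀ i, 0 ≤ g i)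
    (hg : ∀ s, ∃ i, s ≤ g i) : omegaSet S K = ⋂ i, closure (orbitTail S K (g i)) := by
  refine subset_antisymm (subset_iInter fun i => biInter_subset_of_mem (hg₀ i)) ?_
  refine subset_iInter₂ fun s _ => ?_
  obtain ⟨i, hi⟩ := hg s
  exact (iInter_subset _ i).trans (closure_mono (orbitTail_antitone hi))

theorem isClosed_omegaSet : IsClosed (omegaSet S K) :=
  isClosed_biInter fun _ _ => isClosed_closure

theorem closure_orbitTail_subset (hK : IsClosed K) (hKK : ∀ t, t₀ ≤ t → S t '' K ⊆ K) {t : ℝ}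
    (ht : t₀ ≤ t) : closure (orbitTail S K t) ⊆ K :=
  closure_minimal (iUnion₂_subset fun s hs => hKK s (ht.trans hs)) hK

theorem directed_closure_orbitTail :
    Directed (· ⊇ ·) fun t : Ici t₀ => closure (orbitTail S K t) :=
  ((monotone_closure X).comp_antitone (orbitTail_antitone.comp_monotone
    (Subtype.mono_coe _))).directed_ge

theorem omegaSet_eq_iInter_Ici (ht₀ : 0 ≤ t₀) :
    omegaSet S K = ⋂ t : Ici t₀, closure (orbitTail S K t) :=
  omegaSet_eq_iInter_closure_orbitTail _ (fun t => ht₀.trans t.2)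
    fun s => ⟨⟨max s t₀, le_max_right s t₀⟩, le_max_left s t₀⟩

variable [T2Space X]

theorem isCompact_closure_orbitTail (hK : IsCompact K) (hKK : ∀ t, t₀ ≤ t → S t '' K ⊆ K)
    {t : ℝ} (ht : t₀ ≤ t) : IsCompact (closure (orbitTail S K t)) :=
  hK.of_isClosed_subset isClosed_closure (closure_orbitTail_subset hK.isClosed hKK ht)

theorem omegaSet_nonempty (hK : IsCompact K) (hKne : K.Nonempty)
    (hKK : ∀ t, t₀ ≤ t → S t '' K ⊆ K) (ht₀ : 0 ≤ t₀) : (omegaSet S K).Nonempty := by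
  rw [omegaSet_eq_iInter_Ici ht₀]
  exact IsCompact.nonempty_iInter_of_directed_nonempty_isCompact_isClosed _
    directed_closure_orbitTail (fun t => (orbitTail_nonempty hKne t).closure)
    (fun t => isCompact_closure_orbitTail hK hKK t.2) fun _ => isClosed_closure

theorem isCompact_omegaSet (hK : IsCompact K) (hKK : ∀ t, t₀ ≤ t → S t '' K ⊆ K)
    (ht₀ : 0 ≤ t₀) : IsCompact (omegaSet S K) :=
  (isCompact_closure_orbitTail hK hKK le_rfl).of_isClosed_subset isClosed_omegaSet
    (biInter_subset_of_mem ht₀)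

theorem image_omegaSet (hSadd : ∀ s t : ℝ, 0 ≤ s → 0 ≤ t → ∀ x, S (s + t) x = S s (S t x))
    (hScont : ∀ t : ℝ, 0 ≤ t → Continuous (S t)) (hK : IsCompact K)
    (hKK : ∀ t, t₀ ≤ t → S t '' K ⊆ K) (ht₀ : 0 ≤ t₀) {τ : ℝ} (hτ : 0 ≤ τ) :
    S τ '' omegaSet S K = omegaSet S K := by
  have hcpt := fun t : Ici t₀ => isCompact_closure_orbitTail hK hKK t.2
  have himage (t : Ici t₀) :
      S τ '' closure (orbitTail S K t) = closure (orbitTail S K (τ + t)) := by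
    rw [image_closure_of_isCompact (hcpt t) (hScont τ hτ).continuousOn,
      image_orbitTail hSadd hτ (ht₀.trans t.2)]
  rw [omegaSet_eq_iInter_Ici ht₀, image_iInter_of_directed_isCompact (hScont τ hτ)
    directed_closure_orbitTail hcpt, ← omegaSet_eq_iInter_Ici ht₀]
  simp_rw [himage]
  exact (omegaSet_eq_iInter_closure_orbitTail _ (fun t => add_nonneg hτ (ht₀.trans t.2))
    fun s => ⟨⟨max s t₀, le_max_right s t₀⟩, le_add_of_nonneg_of_le hτ (le_max_left s t₀)⟩).symm

theorem eventually_image_subset_of_omegaSet_subset (hK : IsCompact K)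
    (hKK : ∀ t, t₀ ≤ t → S t '' K ⊆ K) (ht₀ : 0 ≤ t₀) {U : Set X}
    (hU : U ∈ 𝓝ˢ (omegaSet S K)) : ∀ᶠ t in atTop, S t '' K ⊆ U := by
  obtain ⟨T, hTU⟩ := exists_subset_nhds_of_isCompact directed_closure_orbitTail
    (fun t => isCompact_closure_orbitTail hK hKK t.2)
    (by rwa [← omegaSet_eq_iInter_Ici ht₀, ← mem_nhdsSet_iff_forall])
  exact eventually_atTop.2 ⟨T, fun t ht => (image_subset_orbitTail ht).trans
    (subset_closure.trans hTU)⟩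

end OmegaSet

theorem global_attractor_of_compact_absorbing_general {X : Type*}
    [NormedAddCommGroup X] [Nonempty X]
    (S : ℝ → X → X)
    (hSadd : ∀ s t : ℝ, 0 ≤ s → 0 ≤ t → ∀ x, S (s + t) x = S s (S t x))
    (hScont : ∀ t : ℝ, 0 ≤ t → Continuous (S t))
    (K : Set X) (hK : IsCompact K)
    (habs : ∀ B : Set X, Bornology.IsBounded B →
      ∃ t₀ : ℝ, 0 ≤ t₀ ∧ ∀ t : ℝ, t₀ ≤ t → S t '' B ⊆ K) :
    (omegaSet S K).Nonempty ∧ IsCompact (omegaSet S K) ∧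
      (∀ t : ℝ, 0 ≤ t → S t '' omegaSet S K = omegaSet S K) ∧
      ∀ B : Set X, Bornology.IsBounded B → ∀ ε : ℝ, 0 < ε →
        ∃ T : ℝ, 0 ≤ T ∧ ∀ t : ℝ, T ≤ t → ∀ x ∈ B,
          Metric.infDist (S t x) (omegaSet S K) < ε := by
  obtain ⟨t₀, ht₀, hKK⟩ := habs K hK.isBounded
  have hKne : K.Nonempty := by
    obtain ⟨x⟩ := ‹Nonempty X›
    obtain ⟨t, -, hx⟩ := habs {x} Bornology.isBounded_singleton
    exact ⟨S t x, hx t le_rfl (mem_image_of_mem _ rfl)⟩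
  have hne := omegaSet_nonempty hK hKne hKK ht₀
  refine ⟨hne, isCompact_omegaSet hK hKK ht₀,
    fun t ht => image_omegaSet hSadd hScont hK hKK ht₀ ht, fun B hB ε hε => ?_⟩
  obtain ⟨tB, htB, hBK⟩ := habs B hB
  obtain ⟨T, hT⟩ := eventually_atTop.1 <| eventually_image_subset_of_image_subset hSadd htB
    (hBK tB le_rfl) <| eventually_image_subset_of_omegaSet_subset hK hKK ht₀
      (Metric.thickening_mem_nhdsSet (omegaSet S K) hε)
  exact ⟨max T 0, le_max_right T 0, fun t ht x hx => (Metric.mem_thickening_iff_infDist_lt hne).1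
    (hT t (le_of_max_le_left ht) (mem_image_of_mem _ hx))⟩

/-- If a strongly continuous semigroup `S(t)` on a Banach space `X`
has a compact absorbing set `K`, then `ω(K)` is nonempty, compact, invariant, and
attracts all bounded sets in the Hausdorff semi-distance. -/
theorem global_attractor_of_compact_absorbing {X : Type*}
    [NormedAddCommGroup X] [Nonempty X]
    (S : ℝ → X → X)
    (hS0 : ∀ x, S 0 x = x)
    (hSadd : ∀ s t : ℝ, 0 ≤ s → 0 ≤ t → ∀ x, S (s + t) x = S s (S t x))
    (hScont : ∀ t : ℝ, 0 ≤ t → Continuous (S t))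
    (hStraj : ∀ x, ContinuousOn (fun t => S t x) (Set.Ici 0))
    (K : Set X) (hK : IsCompact K)
    (habs : ∀ B : Set X, Bornology.IsBounded B →
      ∃ t₀ : ℝ, 0 ≤ t₀ ∧ ∀ t : ℝ, t₀ ≤ t → S t '' B ⊆ K) :
    (omegaSet S K).Nonempty ∧ IsCompact (omegaSet S K) ∧
      (∀ t : ℝ, 0 ≤ t → S t '' omegaSet S K = omegaSet S K) ∧
      ∀ B : Set X, Bornology.IsBounded B → ∀ ε : ℝ, 0 < ε →
        ∃ T : ℝ, 0 ≤ T ∧ ∀ t : ℝ, T ≤ t → ∀ x ∈ B,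
          Metric.infDist (S t x) (omegaSet S K) < ε :=
  global_attractor_of_compact_absorbing_general S hSadd hScont K hK habs
end
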